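/- arXiv:2110.03020 — 4 statements merged into one kernel-verified Lean document; each statement's English description precedes it below -/
import Mathlib

section
/- Let ℓ(z, y) = -log([σ(z)]_y) be the multiclass logistic loss with softmax σ on ℝ^K. For any z ∈ ℝ^K, α ∈ ℝ, and labels l, y ∈ {1,...,K}: if l ≠ y then ℓ(z + α e_l, y) - ℓ(z, y) ≤ (e^α - 1)[σ(z)]_l, and if l = y then ℓ(z + α e_l, y) - ℓ(z, y) ≤ (e^{-α} - 1)(1 - [σ(z)]_y). -/
/-!
Writing `S(z) = ∑ⱼ exp zⱼ`, the loss is `ℓ(z, y) = log S(z) - z_y`, and shifting the `l`-th logit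
by `α` multiplies `S` by `r = 1 + (e^α - 1) σ(z)_l`. Hence the increase of the loss is `log r`
when `l ≠ y` and `log r - α = log (r e^{-α})` when `l = y`, and `log x ≤ x - 1` gives both bounds.
-/

open Matrix

/-- The softmax function. -/
noncomputable def softmax {K : ℕ} (z : Fin K → ℝ) : Fin K → ℝ :=
  fun k => Real.exp (z k) / ∑ j, Real.exp (z j)

/-- Multiclass logistic loss `ℓ(z, y) = -log [σ(z)]_y`. -/
noncomputable def mlogloss {K : ℕ} (z : Fin K → ℝ) (y : Fin K) : ℝ :=
  -Real.log (softmax z y)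

open Real

lemma sum_exp_pos {ι : Type*} [Fintype ι] [Nonempty ι] (z : ι → ℝ) : 0 < ∑ j, exp (z j) :=
  Finset.sum_pos (fun _ _ => exp_pos _) Finset.univ_nonempty

lemma sum_exp_add_smul_single {ι : Type*} [Fintype ι] [DecidableEq ι] (z : ι → ℝ) (α : ℝ)
    (l : ι) :
    ∑ j, exp ((z + α • (Pi.single l 1 : ι → ℝ)) j)
      = ∑ j, exp (z j) + (exp α - 1) * exp (z l) := by
  have hdiff : ∑ j, (exp ((z + α • (Pi.single l 1 : ι → ℝ)) j) - exp (z j))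
      = (exp α - 1) * exp (z l) := by
    rw [Fintype.sum_eq_single l fun j hj => by simp [Pi.single_eq_of_ne hj]]
    simp only [Pi.add_apply, Pi.smul_apply, Pi.single_eq_same, smul_eq_mul, mul_one, exp_add]
    ring
  rw [Finset.sum_sub_distrib] at hdiff
  linarith

lemma mlogloss_eq_log_sum_exp_sub {K : ℕ} (z : Fin K → ℝ) (y : Fin K) :
    mlogloss z y = log (∑ j, exp (z j)) - z y := by
  have : Nonempty (Fin K) := ⟨y⟩
  rw [mlogloss, softmax, log_div (exp_ne_zero _) (sum_exp_pos z).ne', log_exp]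
  ring

lemma sum_exp_add_smul_single_div {K : ℕ} (z : Fin K → ℝ) (α : ℝ) (l : Fin K) :
    (∑ j, exp ((z + α • (Pi.single l 1 : Fin K → ℝ)) j)) / ∑ j, exp (z j)
      = 1 + (exp α - 1) * softmax z l := by
  have : Nonempty (Fin K) := ⟨l⟩
  rw [sum_exp_add_smul_single, softmax]
  field_simp [(sum_exp_pos z).ne']

lemma mlogloss_add_smul_single_sub {K : ℕ} (z : Fin K → ℝ) (α : ℝ) (l y : Fin K) :
    mlogloss (z + α • (Pi.single l 1 : Fin K → ℝ)) y - mlogloss z y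
      = log (1 + (exp α - 1) * softmax z l) - α * (Pi.single l 1 : Fin K → ℝ) y := by
  have : Nonempty (Fin K) := ⟨l⟩
  rw [← sum_exp_add_smul_single_div, log_div (sum_exp_pos _).ne' (sum_exp_pos _).ne',
    mlogloss_eq_log_sum_exp_sub, mlogloss_eq_log_sum_exp_sub]
  simp only [Pi.add_apply, Pi.smul_apply, smul_eq_mul]
  ring

lemma one_add_mul_softmax_pos {K : ℕ} (z : Fin K → ℝ) (α : ℝ) (l : Fin K) :
    0 < 1 + (exp α - 1) * softmax z l := by
  have : Nonempty (Fin K) := ⟨l⟩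
  rw [← sum_exp_add_smul_single_div]
  exact div_pos (sum_exp_pos _) (sum_exp_pos _)

/-- Increase of the multiclass logistic loss when the `l`-th logit is shifted by `α`. -/
theorem mlogloss_shift_bound (K : ℕ) (z : Fin K → ℝ) (α : ℝ) (l y : Fin K) :
    (l ≠ y →
      mlogloss (z + α • (Pi.single l 1 : Fin K → ℝ)) y - mlogloss z y
        ≤ (Real.exp α - 1) * softmax z l) ∧
    (l = y →
      mlogloss (z + α • (Pi.single l 1 : Fin K → ℝ)) y - mlogloss z y
        ≤ (Real.exp (-α) - 1) * (1 - softmax z y)) := by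
  set r := 1 + (exp α - 1) * softmax z l with hr
  have hr_pos : 0 < r := one_add_mul_softmax_pos z α l
  refine ⟨fun hly => ?_, ?_⟩
  · rw [mlogloss_add_smul_single_sub, Pi.single_eq_of_ne hly.symm, mul_zero, sub_zero]
    linarith [log_le_sub_one_of_pos hr_pos]
  · rintro rfl
    rw [mlogloss_add_smul_single_sub, Pi.single_eq_same, mul_one]
    calc log r - α = log (r * exp (-α)) := by
          rw [log_mul hr_pos.ne' (exp_ne_zero _), log_exp]; ring
      _ ≤ r * exp (-α) - 1 := log_le_sub_one_of_pos (mul_pos hr_pos (exp_pos _))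
      _ = (exp (-α) - 1) * (1 - softmax z l) := by
        rw [hr, exp_neg]
        field_simp
        ring
end

section
/- For any real numbers A, B ≥ 0 with A - B ∈ [-1, 1] and A + B ≤ 1, we have inf_{α ∈ [-2, 2]} [A(e^α - 1) + B(e^{-α} - 1)] ≤ -(A - B)²/2. -/
/-- Quartic upper bound for `exp` on `[-1,1]`. -/
lemma exp_quartic_bound {x : ℝ} (hx : |x| ≤ 1) :
    Real.exp x ≤ 1 + x + x ^ 2 / 2 + x ^ 3 / 6 + 5 * x ^ 4 / 96 := by
  have h := Real.exp_bound hx (n := 4) (by norm_num)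
  have hsum : ∑ m ∈ Finset.range 4, x ^ m / (Nat.factorial m : ℝ)
      = 1 + x + x ^ 2 / 2 + x ^ 3 / 6 := by
    norm_num [Finset.sum_range_succ, Nat.factorial]
  rw [hsum] at h
  have habs := abs_le.1 h
  have h4 : |x| ^ 4 = x ^ 4 := by
    rw [← abs_pow, abs_of_nonneg (by positivity)]
  have : Real.exp x - (1 + x + x ^ 2 / 2 + x ^ 3 / 6)
      ≤ x ^ 4 * (5 / (24 * 4)) := by
    calc Real.exp x - (1 + x + x ^ 2 / 2 + x ^ 3 / 6) ≤ |x| ^ 4 * (5 / (24 * 4)) := by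
          simpa [Nat.factorial] using habs.2
      _ = x ^ 4 * (5 / (24 * 4)) := by rw [h4]
  linarith

lemma key_poly (B d : ℝ) (hB : 0 ≤ B) (hA : 0 ≤ B + d) (hsum : (B + d) + B ≤ 1) :
    (B + d) * (1 - d + d ^ 2 / 2 - d ^ 3 / 6 + 5 * d ^ 4 / 96)
      + B * (1 + d + d ^ 2 / 2 + d ^ 3 / 6 + 5 * d ^ 4 / 96)
      - (B + d) - B ≤ -d ^ 2 / 2 := by
  nlinarith [mul_nonneg (sq_nonneg d) (by linarith : (0:ℝ) ≤ 1 - (2*B + d)),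
    mul_nonneg (mul_nonneg (sq_nonneg d) (sq_nonneg d)) (by linarith : (0:ℝ) ≤ 1 - (2*B + d)),
    mul_nonneg (sq_nonneg d) (sq_nonneg d)]

/-- For `A, B ≥ 0` with `|A - B| ≤ 1` and `A + B ≤ 1`,
`inf_{α ∈ [-2,2]} [A(e^α - 1) + B(e^{-α} - 1)] ≤ -(A - B)²/2`. -/
theorem inf_exp_combination_le (A B : ℝ) (hA : 0 ≤ A) (hB : 0 ≤ B)
    (hABlb : -1 ≤ A - B) (hABub : A - B ≤ 1) (hsum : A + B ≤ 1) :
    sInf ((fun α => A * (Real.exp α - 1) + B * (Real.exp (-α) - 1)) ''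
        Set.Icc (-2 : ℝ) 2)
      ≤ -(A - B) ^ 2 / 2 := by
  obtain ⟨d, rfl⟩ : ∃ d, A = B + d := ⟨A - B, by ring⟩
  have hdlb : -1 ≤ d := by linarith
  have hdub : d ≤ 1 := by linarith
  have hd1 : |d| ≤ 1 := abs_le.2 ⟨hdlb, hdub⟩
  have hd1' : |(-d)| ≤ 1 := by rwa [abs_neg]
  have hmem : -d ∈ Set.Icc (-2 : ℝ) 2 := by
    constructor <;> linarith
  have hbdd : BddBelow ((fun α => (B + d) * (Real.exp α - 1) + B * (Real.exp (-α) - 1)) ''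
      Set.Icc (-2 : ℝ) 2) := by
    refine ⟨-((B + d) + B), ?_⟩
    rintro y ⟨α, -, rfl⟩
    have h1 := Real.exp_pos α
    have h2 := Real.exp_pos (-α)
    simp only
    nlinarith
  have hle : sInf ((fun α => (B + d) * (Real.exp α - 1) + B * (Real.exp (-α) - 1)) ''
      Set.Icc (-2 : ℝ) 2) ≤ (B + d) * (Real.exp (-d) - 1) + B * (Real.exp (-(-d)) - 1) :=
    csInf_le hbdd ⟨-d, hmem, rfl⟩
  have e1 : Real.exp d ≤ 1 + d + d ^ 2 / 2 + d ^ 3 / 6 + 5 * d ^ 4 / 96 :=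
    exp_quartic_bound hd1
  have e2' : Real.exp (-d) ≤ 1 - d + d ^ 2 / 2 - d ^ 3 / 6 + 5 * d ^ 4 / 96 := by
    nlinarith [exp_quartic_bound hd1']
  have m1 : (B + d) * Real.exp (-d) ≤ (B + d) * (1 - d + d ^ 2 / 2 - d ^ 3 / 6 + 5 * d ^ 4 / 96) :=
    mul_le_mul_of_nonneg_left e2' hA
  have m2 : B * Real.exp d ≤ B * (1 + d + d ^ 2 / 2 + d ^ 3 / 6 + 5 * d ^ 4 / 96) :=
    mul_le_mul_of_nonneg_left e1 hB
  have key : (B + d) * (Real.exp (-d) - 1) + B * (Real.exp (-(-d)) - 1) ≤ -d ^ 2 / 2 := by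
    rw [neg_neg]
    have := key_poly B d hB hA hsum
    linarith
  calc sInf _ ≤ (B + d) * (Real.exp (-d) - 1) + B * (Real.exp (-(-d)) - 1) := hle
    _ ≤ -d ^ 2 / 2 := key
    _ = -((B + d) - B) ^ 2 / 2 := by ring
end

section
/- Let K = 3, B, R > 0. Set W = diag(0, 0, B) ∈ ℝ^{3×3}, x = (0, 0, R)ᵀ, so that z = Wx = (0, 0, BR)ᵀ and σ = σ(z) satisfies σ₁ = σ₂ = 1/(e^{BR} + 2). Let v = (e₁ - e₂) ⊗ x ∈ ℝ^9. Then vᵀ[(diag(σ) - σσᵀ) ⊗ (xxᵀ)]v = (σ₁ + σ₂)R⁴ = 2R⁴/(e^{BR} + 2), while vᵀ[(e₁e₁ᵀ) ⊗ (xxᵀ)]v = R⁴. Consequently, if (e₁e₁ᵀ) ⊗ (xxᵀ) ⪯ c(diag(σ) - σσᵀ) ⊗ (xxᵀ) for some c > 0, then c ≥ (e^{BR} + 2)/2. -/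
open Matrix Kronecker

/-- For `K = 3`, `W = diag(0,0,B)`, `x = (0,0,R)ᵀ` so that `σ = σ(Wx)` has
`σ₁ = σ₂ = 1/(e^{BR}+2)`, and `v = (e₁ - e₂) ⊗ x`, the quadratic forms of the
Hessian block `(diag(σ) - σσᵀ) ⊗ xxᵀ` and of `(e₁e₁ᵀ) ⊗ xxᵀ` at `v` are
`(σ₁+σ₂)R⁴ = 2R⁴/(e^{BR}+2)` and `R⁴` respectively; hence Hessian dominance
with constant `c` forces `c ≥ (e^{BR}+2)/2`. -/
theorem hessian_dominance_fails_three_classes (B R : ℝ) (hB : 0 < B) (hR : 0 < R) :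
    softmax ![0, 0, B * R] 0 = 1 / (Real.exp (B * R) + 2) ∧
    softmax ![0, 0, B * R] 1 = 1 / (Real.exp (B * R) + 2) ∧
    (fun q : Fin 3 × Fin 3 => ![(1 : ℝ), -1, 0] q.1 * ![0, 0, R] q.2) ⬝ᵥ
        ((Matrix.diagonal (softmax ![0, 0, B * R])
            - Matrix.vecMulVec (softmax ![0, 0, B * R]) (softmax ![0, 0, B * R]))
          ⊗ₖ Matrix.vecMulVec ![0, 0, R] ![0, 0, R]).mulVec
          (fun q : Fin 3 × Fin 3 => ![(1 : ℝ), -1, 0] q.1 * ![0, 0, R] q.2)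
      = (softmax ![0, 0, B * R] 0 + softmax ![0, 0, B * R] 1) * R ^ 4 ∧
    (softmax ![0, 0, B * R] 0 + softmax ![0, 0, B * R] 1) * R ^ 4
      = 2 * R ^ 4 / (Real.exp (B * R) + 2) ∧
    (fun q : Fin 3 × Fin 3 => ![(1 : ℝ), -1, 0] q.1 * ![0, 0, R] q.2) ⬝ᵥ
        (Matrix.vecMulVec ![(1 : ℝ), 0, 0] ![(1 : ℝ), 0, 0]
          ⊗ₖ Matrix.vecMulVec ![0, 0, R] ![0, 0, R]).mulVec
          (fun q : Fin 3 × Fin 3 => ![(1 : ℝ), -1, 0] q.1 * ![0, 0, R] q.2)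
      = R ^ 4 ∧
    (∀ c : ℝ, 0 < c →
      (c • ((Matrix.diagonal (softmax ![0, 0, B * R])
              - Matrix.vecMulVec (softmax ![0, 0, B * R]) (softmax ![0, 0, B * R]))
            ⊗ₖ Matrix.vecMulVec ![0, 0, R] ![0, 0, R])
        - Matrix.vecMulVec ![(1 : ℝ), 0, 0] ![(1 : ℝ), 0, 0]
            ⊗ₖ Matrix.vecMulVec ![0, 0, R] ![0, 0, R]).PosSemidef →
      (Real.exp (B * R) + 2) / 2 ≤ c) := by
  have hEpos : 0 < Real.exp (B * R) := Real.exp_pos _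
  set E := Real.exp (B * R) with hE
  have hE2 : (0:ℝ) < E + 2 := by linarith
  have hE2' : E + 2 ≠ 0 := ne_of_gt hE2
  have hsig : softmax ![0, 0, B * R] = ![1/(E+2), 1/(E+2), E/(E+2)] := by
    funext i
    fin_cases i <;>
      simp [softmax, Fin.sum_univ_three, Real.exp_zero, ← hE] <;>
      rw [show (1:ℝ) + 1 + E = E + 2 by ring]
  set v := (fun q : Fin 3 × Fin 3 => ![(1 : ℝ), -1, 0] q.1 * ![0, 0, R] q.2) with hv
  have hA : v ⬝ᵥ ((Matrix.diagonal (softmax ![0, 0, B * R])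
            - Matrix.vecMulVec (softmax ![0, 0, B * R]) (softmax ![0, 0, B * R]))
          ⊗ₖ Matrix.vecMulVec ![0, 0, R] ![0, 0, R]).mulVec v
        = 2 * R ^ 4 / (E + 2) := by
    rw [hsig]
    simp only [hv, dotProduct, mulVec, Fintype.sum_prod_type, Fin.sum_univ_three,
      kroneckerMap_apply, vecMulVec_apply, Matrix.sub_apply, Matrix.diagonal]
    simp [Matrix.of_apply]
    field_simp
    ring
  have hBm : v ⬝ᵥ (Matrix.vecMulVec ![(1 : ℝ), 0, 0] ![(1 : ℝ), 0, 0]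
          ⊗ₖ Matrix.vecMulVec ![0, 0, R] ![0, 0, R]).mulVec v = R ^ 4 := by
    simp only [hv, dotProduct, mulVec, Fintype.sum_prod_type, Fin.sum_univ_three,
      kroneckerMap_apply, vecMulVec_apply]
    simp [Matrix.of_apply]
    ring
  have hsum : (softmax ![0, 0, B * R] 0 + softmax ![0, 0, B * R] 1) * R ^ 4
      = 2 * R ^ 4 / (E + 2) := by
    rw [hsig]; simp; ring
  refine ⟨by rw [hsig]; simp, by rw [hsig]; simp, by rw [hA, hsum], hsum, hBm, ?_⟩
  intro c hc hpsd
  have key := hpsd.dotProduct_mulVec_nonneg v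
  rw [Matrix.sub_mulVec, Matrix.smul_mulVec, dotProduct_sub, dotProduct_smul,
    star_trivial, hA, hBm, smul_eq_mul] at key
  have h1 : R ^ 4 ≤ c * (2 * R ^ 4) / (E + 2) := by
    rw [show c * (2 * R ^ 4) / (E + 2) = c * (2 * R ^ 4 / (E + 2)) by ring]
    linarith
  have h2 := (le_div_iff₀ hE2).mp h1
  have hR4 : 0 < R ^ 4 := pow_pos hR 4
  rw [div_le_iff₀ (by norm_num : (0:ℝ) < 2)]
  nlinarith [h2, hR4]
end

section
/- Let ℓ_t, ℓ̂_t be convex functions with ℓ̂_t(W_t) = ℓ_t(W_t) and ℓ̂_t(W) ≤ ℓ_t(W) for all W in a set 𝒲, where W_t = argmin_W [λ‖W‖² + ∑_{s<t} ℓ̂_s(W) + φ_t(W)] and each ℓ̂_t is quadratic with Hessian contribution making L̂_t(W) = λ‖W‖² + ∑_{s≤t} ℓ̂_s(W) a quadratic with positive definite Hessian 2A_t. Then for any W ∈ 𝒲, ∑_{t=1}^T (ℓ_t(W_t) - ℓ_t(W)) ≤ λ‖W‖² + (1/4)∑_{t=1}^T [‖∇φ_t(W_t) - ∇ℓ_t(W_t)‖²_{A_t⁻¹}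 - ‖∇φ_t(W_t)‖²_{A_{t-1}⁻¹}]. -/
/-!
Each cumulative surrogate `L̂_t = λ‖·‖² + ∑_{s<t} ℓ̂_s` is a quadratic `V ↦ C + ⟨B, V⟩ + ⟨V, A V⟩`
with `A` positive definite, and completing the square writes it as its minimum value `m_t` plus
`¼ ‖∇L̂_t(V)‖²_{A⁻¹}`. First-order optimality of `W_t` gives `∇L̂_t(W_t) = -∇φ_t(W_t)`, hence
`∇L̂_{t+1}(W_t) = ∇ℓ_t(W_t) - ∇φ_t(W_t)`, so evaluating `ℓ̂_t = L̂_{t+1} - L̂_t` at `W_t` yields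
`ℓ̂_t(W_t) = m_{t+1} - m_t + ¼ (‖∇φ_t - ∇ℓ_t‖²_{A_{t+1}⁻¹} - ‖∇φ_t‖²_{A_t⁻¹})`. The sum telescopes
to `m_T ≤ L̂_T(W) = λ‖W‖² + ∑_t ℓ̂_t(W)`, and `ℓ_t(W_t) - ℓ_t(W) ≤ ℓ̂_t(W_t) - ℓ̂_t(W)` on `𝒲`.
Rounds are indexed from `0`, so the paper's `A_t` and `A_{t-1}` are `A (t + 1)` and `A t`.
-/

open Matrix Finset

theorem Matrix.IsSymm.dotProduct_mulVec_comm {n R : Type*} [Fintype n] [CommSemiring R]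
    {A : Matrix n n R} (hA : A.IsSymm) (v w : n → R) : v ⬝ᵥ A *ᵥ w = w ⬝ᵥ A *ᵥ v := by
  rw [dotProduct_mulVec, ← mulVec_transpose, hA.eq, dotProduct_comm]

theorem Matrix.PosSemidef.isSymm {n : Type*} {A : Matrix n n ℝ} (hA : A.PosSemidef) :
    A.IsSymm :=
  isHermitian_iff_isSymm.mp hA.isHermitian

theorem posDef_smul_one_add_sum {n ι : Type*} [DecidableEq n] {lam : ℝ} (hlam : 0 < lam)
    {s : Finset ι} {Q : ι → Matrix n n ℝ} (hQ : ∀ i ∈ s, (Q i).PosSemidef) :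
    (lam • 1 + ∑ i ∈ s, Q i).PosDef :=
  (PosDef.one.smul hlam).add_posSemidef (posSemidef_sum s hQ)

section Quadratic

variable {n : Type*} [Fintype n]

def quadratic (A : Matrix n n ℝ) (b : n → ℝ) (c : ℝ) (x : n → ℝ) : ℝ :=
  c + b ⬝ᵥ x + x ⬝ᵥ A *ᵥ x

theorem quadratic_add (A A' : Matrix n n ℝ) (b b' : n → ℝ) (c c' : ℝ) (x : n → ℝ) :
    quadratic A b c x + quadratic A' b' c' x = quadratic (A + A') (b + b') (c + c') x := by
  simp only [quadratic, add_mulVec, dotProduct_add, add_dotProduct]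
  ring

theorem mul_dotProduct_self_add_sum_quadratic [DecidableEq n] {ι : Type*} (lam : ℝ)
    (s : Finset ι) (A : ι → Matrix n n ℝ) (b : ι → n → ℝ) (c : ι → ℝ) (x : n → ℝ) :
    lam * (x ⬝ᵥ x) + ∑ i ∈ s, quadratic (A i) (b i) (c i) x
      = quadratic (lam • 1 + ∑ i ∈ s, A i) (∑ i ∈ s, b i) (∑ i ∈ s, c i) x := by
  simp only [quadratic, add_mulVec, smul_mulVec, one_mulVec, dotProduct_add, dotProduct_smul,
    smul_eq_mul, sum_mulVec, dotProduct_sum, sum_dotProduct, sum_add_distrib]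
  ring

theorem quadratic_add_smul {A : Matrix n n ℝ} (hA : A.IsSymm) (b : n → ℝ) (c : ℝ)
    (x u : n → ℝ) (s : ℝ) :
    quadratic A b c (x + s • u)
      = quadratic A b c x + s * (((2 : ℝ) • (A *ᵥ x) + b) ⬝ᵥ u) + s ^ 2 * (u ⬝ᵥ A *ᵥ u) := by
  simp only [quadratic, mulVec_add, mulVec_smul, dotProduct_add, add_dotProduct,
    dotProduct_smul, smul_dotProduct, smul_eq_mul, hA.dotProduct_mulVec_comm x u,
    dotProduct_comm u (A *ᵥ x)]
  ring

theorem hasDerivAt_quadratic_add_smul {A : Matrix n n ℝ} (hA : A.IsSymm) (b : n → ℝ) (c : ℝ)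
    (x u : n → ℝ) :
    HasDerivAt (fun s : ℝ => quadratic A b c (x + s • u)) (((2 : ℝ) • (A *ᵥ x) + b) ⬝ᵥ u) 0 := by
  simp only [quadratic_add_smul hA]
  simpa using (((hasDerivAt_id (0 : ℝ)).mul_const _).const_add _).fun_add
    ((hasDerivAt_pow 2 (0 : ℝ)).mul_const (u ⬝ᵥ A *ᵥ u))

variable [DecidableEq n]

noncomputable def quadraticMin (A : Matrix n n ℝ) (b : n → ℝ) (c : ℝ) : ℝ :=
  c - 1 / 4 * (b ⬝ᵥ A⁻¹ *ᵥ b)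

theorem quadratic_eq_quadraticMin_add {A : Matrix n n ℝ} (hA : A.IsSymm) (hdet : IsUnit A.det)
    (b : n → ℝ) (c : ℝ) (x : n → ℝ) :
    quadratic A b c x = quadraticMin A b c
      + 1 / 4 * (((2 : ℝ) • (A *ᵥ x) + b) ⬝ᵥ A⁻¹ *ᵥ ((2 : ℝ) • (A *ᵥ x) + b)) := by
  have hinv : A⁻¹ *ᵥ (A *ᵥ x) = x := by rw [mulVec_mulVec, nonsing_inv_mul A hdet, one_mulVec]
  have hcross : A *ᵥ x ⬝ᵥ A⁻¹ *ᵥ b = b ⬝ᵥ x := by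
    rw [hA.inv.dotProduct_mulVec_comm, hinv]
  simp only [quadratic, quadraticMin, mulVec_add, mulVec_smul, hinv, dotProduct_add,
    add_dotProduct, dotProduct_smul, smul_dotProduct, smul_eq_mul, hcross,
    dotProduct_comm (A *ᵥ x) x]
  ring

theorem quadraticMin_le_quadratic {A : Matrix n n ℝ} (hA : A.PosDef) (b : n → ℝ) (c : ℝ)
    (x : n → ℝ) : quadraticMin A b c ≤ quadratic A b c x := by
  rw [quadratic_eq_quadraticMin_add hA.posSemidef.isSymm
    ((isUnit_iff_isUnit_det A).mp hA.isUnit) b c x]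
  have := hA.inv.posSemidef.dotProduct_mulVec_nonneg ((2 : ℝ) • (A *ᵥ x) + b)
  rw [star_trivial] at this
  linarith

theorem quadratic_eq_quadraticMin_sub_add {A Q : Matrix n n ℝ} (hA : A.IsSymm) (hQ : Q.IsSymm)
    (hdet : IsUnit A.det) (hdet' : IsUnit (A + Q).det) (B b : n → ℝ) (C c : ℝ) {x g : n → ℝ}
    (hg : (2 : ℝ) • (A *ᵥ x) + B = -g) :
    quadratic Q b c x = quadraticMin (A + Q) (B + b) (C + c) - quadraticMin A B C
      + 1 / 4 * ((g - (b + (2 : ℝ) • (Q *ᵥ x))) ⬝ᵥ (A + Q)⁻¹ *ᵥ (g - (b + (2 : ℝ) • (Q *ᵥ x)))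
        - g ⬝ᵥ A⁻¹ *ᵥ g) := by
  have hg' : (2 : ℝ) • ((A + Q) *ᵥ x) + (B + b) = -(g - (b + (2 : ℝ) • (Q *ᵥ x))) := by
    rw [← neg_neg g, ← hg, add_mulVec, smul_add]
    abel
  have h := quadratic_add A Q B b C c x
  rw [quadratic_eq_quadraticMin_add hA hdet, quadratic_eq_quadraticMin_add (hA.add hQ) hdet',
    hg, hg'] at h
  simp only [neg_dotProduct, mulVec_neg, dotProduct_neg, neg_neg] at h
  linarith

end Quadratic

theorem eq_zero_of_forall_le_of_hasDerivAt_line {n : Type*} [Fintype n] {F : (n → ℝ) → ℝ}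
    {x g : n → ℝ} (hmin : ∀ y, F x ≤ F y)
    (hF : ∀ u, HasDerivAt (fun s : ℝ => F (x + s • u)) (g ⬝ᵥ u) 0) : g = 0 :=
  dotProduct_eq_zero g fun u => IsLocalMin.hasDerivAt_eq_zero
    (Filter.Eventually.of_forall fun s => by simpa using hmin (x + s • u)) (hF u)

theorem ftrl_quadratic_regret_le {n : Type*} [Fintype n] [DecidableEq n] {T : ℕ} {lam : ℝ}
    (hlam : 0 < lam) {Q A : ℕ → Matrix n n ℝ} {b : ℕ → n → ℝ} {c : ℕ → ℝ}
    (hA : ∀ t, A t = lam • 1 + ∑ s ∈ range t, Q s) (hQ : ∀ t < T, (Q t).PosSemidef)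
    {x g : ℕ → n → ℝ} (hg : ∀ t < T, (2 : ℝ) • (A t *ᵥ x t) + ∑ s ∈ range t, b s = -g t)
    (W : n → ℝ) :
    ∑ t ∈ range T, (quadratic (Q t) (b t) (c t) (x t) - quadratic (Q t) (b t) (c t) W)
      ≤ lam * (W ⬝ᵥ W) + 1 / 4 * ∑ t ∈ range T,
        ((g t - (b t + (2 : ℝ) • (Q t *ᵥ x t))) ⬝ᵥ (A (t + 1))⁻¹ *ᵥ
            (g t - (b t + (2 : ℝ) • (Q t *ᵥ x t))) - g t ⬝ᵥ (A t)⁻¹ *ᵥ g t) := by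
  set B : ℕ → n → ℝ := fun t => ∑ s ∈ range t, b s
  set C : ℕ → ℝ := fun t => ∑ s ∈ range t, c s
  set M : ℕ → ℝ := fun t => quadraticMin (A t) (B t) (C t)
  have hApd : ∀ t ≤ T, (A t).PosDef := fun t ht =>
    hA t ▸ posDef_smul_one_add_sum hlam fun s hs => hQ s ((mem_range.mp hs).trans_le ht)
  have hdet : ∀ t ≤ T, IsUnit (A t).det := fun t ht =>
    (isUnit_iff_isUnit_det _).mp (hApd t ht).isUnit
  have hround : ∀ t ∈ range T, quadratic (Q t) (b t) (c t) (x t) = M (t + 1) - M t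
      + 1 / 4 * ((g t - (b t + (2 : ℝ) • (Q t *ᵥ x t))) ⬝ᵥ (A (t + 1))⁻¹ *ᵥ
            (g t - (b t + (2 : ℝ) • (Q t *ᵥ x t))) - g t ⬝ᵥ (A t)⁻¹ *ᵥ g t) := by
    intro t ht
    rw [mem_range] at ht
    have hsucc : A (t + 1) = A t + Q t := by rw [hA, hA, sum_range_succ, add_assoc]
    simp only [M, B, C, sum_range_succ, hsucc]
    exact quadratic_eq_quadraticMin_sub_add (hApd t ht.le).posSemidef.isSymm (hQ t ht).isSymm
      (hdet t ht.le) (hsucc ▸ hdet (t + 1) ht) _ _ _ _ (hg t ht)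
  have hM0 : M 0 = 0 := by simp [M, B, C, quadraticMin]
  have hW : ∑ t ∈ range T, quadratic (Q t) (b t) (c t) W
      = quadratic (A T) (B T) (C T) W - lam * (W ⬝ᵥ W) := by
    rw [hA, ← mul_dotProduct_self_add_sum_quadratic]
    ring
  rw [sum_sub_distrib, sum_congr rfl hround, sum_add_distrib, sum_range_sub M, hM0, ← mul_sum, hW]
  linarith [quadraticMin_le_quadratic (hApd T le_rfl) (B T) (C T) W]

theorem skewed_ftrl_regret_general (n T : ℕ) (lam : ℝ) (hlam : 0 < lam)
    (𝒲 : Set (Fin n → ℝ))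
    (ℓ ℓhat φ : ℕ → (Fin n → ℝ) → ℝ)
    (Wt : ℕ → Fin n → ℝ)
    (b : ℕ → Fin n → ℝ) (c : ℕ → ℝ) (Q : ℕ → Matrix (Fin n) (Fin n) ℝ)
    (gl gphi : ℕ → Fin n → ℝ)
    (A : ℕ → Matrix (Fin n) (Fin n) ℝ)
    (hA : ∀ t, A t = lam • (1 : Matrix (Fin n) (Fin n) ℝ) + ∑ s ∈ Finset.range t, Q s)
    (hQ : ∀ t < T, (Q t).PosSemidef)
    (hlhat : ∀ t < T, ∀ V, ℓhat t V = c t + b t ⬝ᵥ V + V ⬝ᵥ (Q t).mulVec V)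
    (htouch : ∀ t < T, ℓhat t (Wt t) = ℓ t (Wt t))
    (hle : ∀ t < T, ∀ V ∈ 𝒲, ℓhat t V ≤ ℓ t V)
    (hmin : ∀ t < T, ∀ V,
      lam * (Wt t ⬝ᵥ Wt t) + (∑ s ∈ Finset.range t, ℓhat s (Wt t)) + φ t (Wt t)
        ≤ lam * (V ⬝ᵥ V) + (∑ s ∈ Finset.range t, ℓhat s V) + φ t V)
    (hgphi : ∀ t < T, ∀ u : Fin n → ℝ,
      HasDerivAt (fun s : ℝ => φ t (Wt t + s • u)) (gphi t ⬝ᵥ u) 0)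
    (hgleq : ∀ t < T, gl t = b t + (2 : ℝ) • (Q t).mulVec (Wt t))
    (W : Fin n → ℝ) (hW : W ∈ 𝒲) :
    ∑ t ∈ Finset.range T, (ℓ t (Wt t) - ℓ t W)
      ≤ lam * (W ⬝ᵥ W) +
        (1 / 4) * ∑ t ∈ Finset.range T,
          ((gphi t - gl t) ⬝ᵥ ((A (t + 1))⁻¹).mulVec (gphi t - gl t)
            - gphi t ⬝ᵥ ((A t)⁻¹).mulVec (gphi t)) := by
  have hsurrogate : ∀ t < T, ∀ V, ℓhat t V = quadratic (Q t) (b t) (c t) V := hlhat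
  have hL : ∀ t < T, ∀ V, lam * (V ⬝ᵥ V) + ∑ s ∈ range t, ℓhat s V
      = quadratic (A t) (∑ s ∈ range t, b s) (∑ s ∈ range t, c s) V := fun t ht V => by
    rw [hA, ← mul_dotProduct_self_add_sum_quadratic,
      sum_congr rfl fun s hs => hsurrogate s ((mem_range.mp hs).trans ht) V]
  have hgrad : ∀ t < T, (2 : ℝ) • (A t *ᵥ Wt t) + ∑ s ∈ range t, b s = -gphi t := by
    intro t ht
    have hsymm : (A t).IsSymm := (hA t ▸ posDef_smul_one_add_sum hlam fun s hs =>
      hQ s ((mem_range.mp hs).trans ht)).posSemidef.isSymm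
    refine eq_neg_of_add_eq_zero_left (eq_zero_of_forall_le_of_hasDerivAt_line (x := Wt t)
      (F := fun V => quadratic (A t) (∑ s ∈ range t, b s) (∑ s ∈ range t, c s) V + φ t V)
      (fun V => ?_) fun u => ?_)
    · simpa only [hL t ht] using hmin t ht V
    · rw [add_dotProduct]
      exact (hasDerivAt_quadratic_add_smul hsymm _ _ _ u).add (hgphi t ht u)
  calc ∑ t ∈ range T, (ℓ t (Wt t) - ℓ t W)
      ≤ ∑ t ∈ range T, (ℓhat t (Wt t) - ℓhat t W) := sum_le_sum fun t ht => by
        linarith [htouch t (mem_range.mp ht), hle t (mem_range.mp ht) W hW]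
    _ ≤ _ := by
      rw [sum_congr rfl fun t ht => by
        rw [hsurrogate t (mem_range.mp ht), hsurrogate t (mem_range.mp ht)]]
      convert ftrl_quadratic_regret_le hlam hA hQ hgrad W using 4 with t ht
      rw [hgleq t (mem_range.mp ht)]

/-- Regret decomposition for FTRL with quadratic surrogate losses and improper
regularizers (Lemma 3 of the paper). The surrogates `ℓ̂ t` are quadratics
`ℓhat t V = c t + ⟨b t, V⟩ + ⟨V, Q t V⟩` touching the losses `ℓ t` at the
iterates `Wt t` from below on `𝒲`; `A t = λ I + ∑_{s<t} Q s` so that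
`L̂_t = λ‖·‖² + ∑_{s≤t} ℓ̂_s` is quadratic with positive definite Hessian
`2 A (t+1)`; `Wt t` minimizes `λ‖·‖² + ∑_{s<t} ℓ̂_s + φ t`; `gphi t` and `gl t`
are (Gâteaux) gradients of `φ t` and `ℓ t` at `Wt t`, with
`gl t = ∇ℓ̂ t (Wt t)`. Then for any comparator `W ∈ 𝒲`, the regret is at most
`λ‖W‖² + (1/4) ∑_t [‖∇φ_t(W_t) - ∇ℓ_t(W_t)‖²_{A_t⁻¹} - ‖∇φ_t(W_t)‖²_{A_{t-1}⁻¹}]`. -/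
theorem skewed_ftrl_regret (n T : ℕ) (lam : ℝ) (hlam : 0 < lam)
    (𝒲 : Set (Fin n → ℝ))
    (ℓ ℓhat φ : ℕ → (Fin n → ℝ) → ℝ)
    (Wt : ℕ → Fin n → ℝ)
    (b : ℕ → Fin n → ℝ) (c : ℕ → ℝ) (Q : ℕ → Matrix (Fin n) (Fin n) ℝ)
    (gl gphi : ℕ → Fin n → ℝ)
    (A : ℕ → Matrix (Fin n) (Fin n) ℝ)
    (hA : ∀ t, A t = lam • (1 : Matrix (Fin n) (Fin n) ℝ) + ∑ s ∈ Finset.range t, Q s)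
    (hQ : ∀ t < T, (Q t).PosSemidef)
    (hconv : ∀ t < T, ConvexOn ℝ Set.univ (ℓ t))
    (hlhat : ∀ t < T, ∀ V, ℓhat t V = c t + b t ⬝ᵥ V + V ⬝ᵥ (Q t).mulVec V)
    (htouch : ∀ t < T, ℓhat t (Wt t) = ℓ t (Wt t))
    (hle : ∀ t < T, ∀ V ∈ 𝒲, ℓhat t V ≤ ℓ t V)
    (hmin : ∀ t < T, ∀ V,
      lam * (Wt t ⬝ᵥ Wt t) + (∑ s ∈ Finset.range t, ℓhat s (Wt t)) + φ t (Wt t)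
        ≤ lam * (V ⬝ᵥ V) + (∑ s ∈ Finset.range t, ℓhat s V) + φ t V)
    (hgphi : ∀ t < T, ∀ u : Fin n → ℝ,
      HasDerivAt (fun s : ℝ => φ t (Wt t + s • u)) (gphi t ⬝ᵥ u) 0)
    (hgl : ∀ t < T, ∀ u : Fin n → ℝ,
      HasDerivAt (fun s : ℝ => ℓ t (Wt t + s • u)) (gl t ⬝ᵥ u) 0)
    (hgleq : ∀ t < T, gl t = b t + (2 : ℝ) • (Q t).mulVec (Wt t))
    (W : Fin n → ℝ) (hW : W ∈ 𝒲) :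
    ∑ t ∈ Finset.range T, (ℓ t (Wt t) - ℓ t W)
      ≤ lam * (W ⬝ᵥ W) +
        (1 / 4) * ∑ t ∈ Finset.range T,
          ((gphi t - gl t) ⬝ᵥ ((A (t + 1))⁻¹).mulVec (gphi t - gl t)
            - gphi t ⬝ᵥ ((A t)⁻¹).mulVec (gphi t)) :=
  skewed_ftrl_regret_general n T lam hlam 𝒲 ℓ ℓhat φ Wt b c Q gl gphi A hA hQ hlhat htouch hle hmin
    hgphi hgleq W hW
end
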